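/- Let H be a complex Hilbert space, M ⊆ B(H) a von Neumann algebra, and (p_λ)_{λ∈Λ} a family of mutually orthogonal cyclic projections in M whose sum is 1 (i.e., for every η ∈ H, Σ_λ p_λ η = η). Then the following four subsets of M coincide: {x ∈ M : {λ : p_λ x ≠ 0} is countable}; {x ∈ M : {λ : x p_λ ≠ 0} is countable}; {x ∈ M : there is a σ-finite projection q ∈ M with q x = x}; {x ∈ M : there is a σ-finite projection q ∈ M with q x q = x}; moreover this common set D is closed under adjoints, is a linear subspace, and is a two-sided ideal in M (a x ∈ D and x a ∈ D for all x ∈ D, a ∈ M). -/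

import Mathlib

set_option synthInstance.maxHeartbeats 1000000
set_option maxHeartbeats 1000000

noncomputable section

namespace Paper

open scoped ComplexConjugate

variable {H : Type*} [NormedAddCommGroup H] [InnerProductSpace ℂ H] [CompleteSpace H]

variable (M : VonNeumannAlgebra H)

/-- The von Neumann algebra `M` regarded as a closed subspace of `B(H)`;
its subtype `↥(carrier M)` is the Banach space `M`. -/
def carrier : Submodule ℂ (H →L[ℂ] H) := M.toStarSubalgebra.toSubalgebra.toSubmodule

theorem mem_carrier {x : H →L[ℂ] H} : x ∈ carrier M ↔ x ∈ M := Iff.rfl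

instance (priority := 10000) : NormedAddCommGroup ↥(carrier M) := inferInstance
instance (priority := 10000) : NormedSpace ℂ ↥(carrier M) := inferInstance
instance (priority := 10000) : NormedAddCommGroup (↥(carrier M) →L[ℂ] ℂ) := inferInstance
instance (priority := 10000) : NormedSpace ℂ (↥(carrier M) →L[ℂ] ℂ) := inferInstance
instance (priority := 10000) : ContinuousAdd (↥(carrier M) →L[ℂ] ℂ) := by
  have h : IsTopologicalAddGroup (↥(carrier M) →L[ℂ] ℂ) := inferInstance
  exact h.toContinuousAdd

/-- The vector functional `ω_{ξ,η} : x ↦ ⟪x ξ, η⟫` (inner product linear in the first slot,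
i.e. `⟪u, v⟫ = inner v u` in Mathlib's convention), as a continuous linear functional on `M`. -/
def vecFunctional (ξ η : H) : ↥(carrier M) →L[ℂ] ℂ :=
  (innerSL ℂ η).comp ((ContinuousLinearMap.apply ℂ H ξ).comp (carrier M).subtypeL)

theorem vecFunctional_apply (ξ η : H) (x : ↥(carrier M)) :
    vecFunctional M ξ η x = inner ℂ η ((x : H →L[ℂ] H) ξ) := rfl

/-- The predual `M_*` of `M`: the norm-closed linear span, inside the dual of `M`,
of the vector functionals `ω_{ξ,η}`. -/
def predual : Submodule ℂ (↥(carrier M) →L[ℂ] ℂ) :=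
  (Submodule.span ℂ {φ | ∃ ξ η : H, φ = vecFunctional M ξ η}).topologicalClosure

theorem vecFunctional_mem_predual (ξ η : H) : vecFunctional M ξ η ∈ predual M :=
  Submodule.le_topologicalClosure _ (Submodule.subset_span ⟨ξ, η, rfl⟩)

instance (priority := 10000) : NormedAddCommGroup ↥(predual M) := inferInstance
instance (priority := 10000) : NormedSpace ℂ ↥(predual M) := inferInstance
instance (priority := 10000) : NormedSpace ℝ ↥(predual M) := inferInstance
instance (priority := 10000) : NormedAddCommGroup (↥(predual M) →L[ℂ] ℂ) := inferInstance
instance (priority := 10000) : NormedSpace ℂ (↥(predual M) →L[ℂ] ℂ) := inferInstance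

/-- a projection belonging to `M` -/
def IsProjectionIn (p : H →L[ℂ] H) : Prop := p ∈ M ∧ IsSelfAdjoint p ∧ p * p = p

/-- `M` is σ-finite: every family of pairwise orthogonal nonzero projections in `M`
is countable. -/
def SigmaFinite : Prop :=
  ∀ P : Set (H →L[ℂ] H),
    (∀ p ∈ P, IsProjectionIn M p ∧ p ≠ 0) →
    (∀ p ∈ P, ∀ q ∈ P, p ≠ q → p * q = 0) →
    P.Countable

/-- A projection `q ∈ M` is σ-finite if every family of pairwise orthogonal nonzero
projections `p ∈ M` with `p = q p q` is countable. -/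
def IsSigmaFiniteProjection (q : H →L[ℂ] H) : Prop :=
  IsProjectionIn M q ∧
    ∀ P : Set (H →L[ℂ] H),
      (∀ p ∈ P, IsProjectionIn M p ∧ p ≠ 0 ∧ p = q * p * q) →
      (∀ p ∈ P, ∀ r ∈ P, p ≠ r → p * r = 0) →
      P.Countable

/-- `ξ` is a generating vector for the projection `p ∈ M`:
the set `M'ξ = {a ξ : a ∈ M'}` is dense in `pH`, the range of `p`. -/
def IsGeneratingVector (p : H →L[ℂ] H) (ξ : H) : Prop :=
  closure {v : H | ∃ a ∈ M.commutant, v = a ξ} = Set.range p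

/-- a cyclic projection in `M` -/
def IsCyclicProjection (p : H →L[ℂ] H) : Prop :=
  IsProjectionIn M p ∧ ∃ ξ : H, IsGeneratingVector M p ξ

/-- The self-adjoint part `M_*^{sa}` of the predual: those `ω ∈ M_*` with
`ω (x*) = conj (ω x)` for all `x ∈ M`; a real-linear subspace of `M_*`. -/
def predualSA : Submodule ℝ ↥(predual M) where
  carrier := {ω | ∀ (x : H →L[ℂ] H) (hx : x ∈ M),
    (ω : ↥(carrier M) →L[ℂ] ℂ) ⟨star x, (mem_carrier M).mpr (star_mem hx)⟩ =
      conj ((ω : ↥(carrier M) →L[ℂ] ℂ) ⟨x, hx⟩)}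
  add_mem' := by
    intro a b ha hb x hx
    simp only [Submodule.coe_add, ContinuousLinearMap.add_apply, ha x hx, hb x hx, map_add]
  zero_mem' := by
    intro x hx
    simp only [ZeroMemClass.coe_zero, ContinuousLinearMap.zero_apply, map_zero]
  smul_mem' := by
    intro r ω hω x hx
    simp only [SetLike.val_smul_of_tower, ContinuousLinearMap.coe_smul', Pi.smul_apply, hω x hx]
    rw [show (conj ((ω : ↥(carrier M) →L[ℂ] ℂ) ⟨x, hx⟩)) = star ((ω : ↥(carrier M) →L[ℂ] ℂ) ⟨x, hx⟩) from rfl,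
      show (conj (r • (ω : ↥(carrier M) →L[ℂ] ℂ) ⟨x, hx⟩)) = star (r • (ω : ↥(carrier M) →L[ℂ] ℂ) ⟨x, hx⟩) from rfl,
      star_smul, star_trivial r]

instance (priority := 10000) : NormedAddCommGroup ↥(predualSA M) := inferInstance
instance (priority := 10000) : NormedSpace ℝ ↥(predualSA M) := inferInstance
instance (priority := 10000) : NormedAddCommGroup (↥(predualSA M) →L[ℝ] ℝ) := inferInstance
instance (priority := 10000) : NormedSpace ℝ (↥(predualSA M) →L[ℝ] ℝ) := inferInstance


/-!
Fix generating vectors `ξ_l` of the `p_l`. Density of `M' ξ_l` in `p_l H` gives, for `x ∈ M`,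
`x p_l = 0 ↔ x ξ_l = 0`, and `∑ p_l = 1` makes `{l | p_l η ≠ 0}` countable for every `η`.
Hence for fixed `l` only countably many `p_l x p_m` are nonzero, which carries countability
from the rows `{l | p_l x ≠ 0}` of `x` to its columns `{m | x p_m ≠ 0}` and back (via `x*`).

For countable `S`, the projection onto the closed span of the `p_l H`, `l ∈ S`, is σ-finite:
a nonzero subprojection `e` of it has `e ξ_l ≠ 0` for some `l ∈ S`, and Bessel's inequality
leaves only countably many pairwise orthogonal such `e` for each `ξ_l`. Taking `S` to contain
the rows and columns of `x` gives `q x = x = x q`. Conversely, a maximal orthogonal family of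
cyclic subprojections of a σ-finite `q` is countable and spans `q H`; if `q x = x` and
`p_l x ≠ 0`, then `p_l ξ_e ≠ 0` for a generating vector `ξ_e` of a member `e` of that family.
-/

open scoped InnerProductSpace

section StarProjection

variable {𝕜 E : Type*} [RCLike 𝕜] [NormedAddCommGroup E] [InnerProductSpace 𝕜 E]

theorem _root_.ContinuousLinearMap.IsIdempotentElem.mul_eq_self_of_range_le {q e : E →L[𝕜] E}
    (hq : IsIdempotentElem q) (h : e.range ≤ q.range) : q * e = e := by
  ext v
  obtain ⟨w, hw : q w = e v⟩ := h (LinearMap.mem_range_self (e : E →ₗ[𝕜] E) v)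
  rw [mul_apply_eq_comp, ← hw, ← mul_apply_eq_comp, hq.eq]

variable [CompleteSpace E]

theorem _root_.IsStarProjection.inner_apply_self {e : E →L[𝕜] E} (he : IsStarProjection e)
    (ξ : E) : ⟪e ξ, ξ⟫_𝕜 = (‖e ξ‖ : 𝕜) ^ 2 :=
  calc ⟪e ξ, ξ⟫_𝕜 = ⟪e (e ξ), ξ⟫_𝕜 := by
        rw [← mul_apply_eq_comp, he.isIdempotentElem.eq]
    _ = ⟪e ξ, e ξ⟫_𝕜 := he.isSelfAdjoint.isSymmetric _ _
    _ = (‖e ξ‖ : 𝕜) ^ 2 := inner_self_eq_norm_sq_to_K _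

theorem _root_.IsStarProjection.inner_apply_apply_eq_zero {e f : E →L[𝕜] E}
    (he : IsStarProjection e) (hef : e * f = 0) (ξ η : E) : ⟪e ξ, f η⟫_𝕜 = 0 :=
  calc ⟪e ξ, f η⟫_𝕜 = ⟪ξ, e (f η)⟫_𝕜 := he.isSelfAdjoint.isSymmetric _ _
    _ = 0 := by rw [← mul_apply_eq_comp, hef, zero_apply, inner_zero_right]

theorem _root_.IsStarProjection.apply_eq_zero_of_range_le_orthogonal {f : E →L[𝕜] E}
    (hf : IsStarProjection f) {K : Submodule 𝕜 E} (h : f.range ≤ Kᗮ) {v : E} (hv : v ∈ K) :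
    f v = 0 := by
  have : ⟪f v, v⟫_𝕜 = 0 :=
    (K.mem_orthogonal' _).1 (h (LinearMap.mem_range_self (f : E →ₗ[𝕜] E) v)) v hv
  simpa [hf.inner_apply_self] using this

/-- Bessel's inequality for the orthonormal vectors `e ξ / ‖e ξ‖`. -/
theorem countable_setOf_apply_ne_zero_of_pairwise_mul_eq_zero {P : Set (E →L[𝕜] E)}
    (hP : ∀ e ∈ P, IsStarProjection e) (horth : P.Pairwise fun e f => e * f = 0) (ξ : E) :
    {e ∈ P | e ξ ≠ 0}.Countable := by
  let v : {e // e ∈ P ∧ e ξ ≠ 0} → E := fun e => (‖e.1 ξ‖⁻¹ : 𝕜) • e.1 ξ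
  have hv : Orthonormal 𝕜 v := by
    refine ⟨fun e => ?_, fun e f hef => ?_⟩
    · simp [v, norm_smul, inv_mul_cancel₀ (norm_ne_zero_iff.2 e.2.2)]
    · simp [v, inner_smul_left, inner_smul_right,
        (hP e.1 e.2.1).inner_apply_apply_eq_zero (horth e.2.1 f.2.1 (Subtype.coe_ne_coe.2 hef))]
  have hsupp : Function.support (fun e => ‖⟪v e, ξ⟫_𝕜‖ ^ 2) = Set.univ :=
    Set.eq_univ_of_forall fun e => by
      simp [v, inner_smul_left, (hP e.1 e.2.1).inner_apply_self, e.2.2]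
  have := (hv.inner_products_summable ξ).countable_support
  rw [hsupp, Set.countable_univ_iff] at this
  exact Set.countable_coe_iff.1 this

end StarProjection

section Invariance

def IsCommutantInvariant (K : Submodule ℂ H) : Prop :=
  ∀ a ∈ M.commutant, K ∈ Module.End.invtSubmodule (a : H →ₗ[ℂ] H)

variable {M}

theorem IsProjectionIn.isStarProjection {p : H →L[ℂ] H} (hp : IsProjectionIn M p) :
    IsStarProjection p :=
  ⟨hp.2.2, hp.2.1⟩

theorem IsProjectionIn.isCommutantInvariant_range {p : H →L[ℂ] H} (hp : IsProjectionIn M p) :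
    IsCommutantInvariant M p.range :=
  fun a ha => ((VonNeumannAlgebra.IsIdempotentElem.mem_iff hp.2.2 M).1 hp.1 a ha).1

theorem IsCommutantInvariant.orthogonal {K : Submodule ℂ H} (hK : IsCommutantInvariant M K) :
    IsCommutantInvariant M Kᗮ :=
  fun a ha => ContinuousLinearMap.orthogonal_mem_invtSubmodule <| by
    simpa [← ContinuousLinearMap.star_eq_adjoint] using hK _ (star_mem ha)

theorem IsCommutantInvariant.inf {K L : Submodule ℂ H} (hK : IsCommutantInvariant M K)
    (hL : IsCommutantInvariant M L) : IsCommutantInvariant M (K ⊓ L) :=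
  fun a ha => Sublattice.inf_mem (hK a ha) (hL a ha)

theorem IsCommutantInvariant.isProjectionIn_starProjection {K : Submodule ℂ H}
    [K.HasOrthogonalProjection] (hK : IsCommutantInvariant M K) :
    IsProjectionIn M K.starProjection := by
  refine ⟨?_, isSelfAdjoint_starProjection K, K.isIdempotentElem_starProjection⟩
  rw [VonNeumannAlgebra.IsStarProjection.mem_iff isStarProjection_starProjection,
    Submodule.range_starProjection]
  exact hK

end Invariance

section CyclicProjection

variable {M}

theorem IsGeneratingVector.apply_self {p : H →L[ℂ] H} {ξ : H} (h : IsGeneratingVector M p ξ)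
    (hp : IsIdempotentElem p) : p ξ = ξ := by
  obtain ⟨w, rfl⟩ : ξ ∈ Set.range p := h ▸ subset_closure ⟨1, one_mem _, rfl⟩
  rw [← mul_apply_eq_comp, hp.eq]

theorem IsGeneratingVector.mul_eq_zero_iff {p x : H →L[ℂ] H} {ξ : H}
    (h : IsGeneratingVector M p ξ) (hp : IsIdempotentElem p) (hx : x ∈ M) :
    x * p = 0 ↔ x ξ = 0 := by
  refine ⟨fun hxp => by rw [← h.apply_self hp, ← mul_apply_eq_comp, hxp, zero_apply],
    fun hξ => ?_⟩
  have hsub : {v | ∃ a ∈ M.commutant, v = a ξ} ⊆ {v | x v = 0} := by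
    rintro _ ⟨a, ha, rfl⟩
    rw [Set.mem_setOf_eq, ← mul_apply_eq_comp, VonNeumannAlgebra.mem_commutant_iff.1 ha x hx,
      mul_apply_eq_comp, hξ, map_zero]
  ext v
  have hv : p v ∈ closure {v | ∃ a ∈ M.commutant, v = a ξ} := h ▸ ⟨v, rfl⟩
  exact closure_minimal hsub (isClosed_eq x.continuous continuous_const) hv

variable (M)

def commutantOrbit (ξ : H) : Submodule ℂ H where
  carrier := {v | ∃ a ∈ M.commutant, v = a ξ}
  add_mem' := by
    rintro _ _ ⟨a, ha, rfl⟩ ⟨b, hb, rfl⟩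
    exact ⟨a + b, add_mem ha hb, rfl⟩
  zero_mem' := ⟨0, zero_mem _, rfl⟩
  smul_mem' := by
    rintro c _ ⟨a, ha, rfl⟩
    exact ⟨c • a, M.commutant.toStarSubalgebra.smul_mem ha c, rfl⟩

def cyclicProjection (ξ : H) : H →L[ℂ] H :=
  (commutantOrbit M ξ).topologicalClosure.starProjection

theorem topologicalClosure_commutantOrbit_le {L : Submodule ℂ H} (hL : IsClosed (L : Set H))
    (hLinv : IsCommutantInvariant M L) {ξ : H} (hξ : ξ ∈ L) :
    (commutantOrbit M ξ).topologicalClosure ≤ L :=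
  Submodule.topologicalClosure_minimal _ (by rintro _ ⟨a, ha, rfl⟩; exact hLinv a ha hξ) hL

theorem isCyclicProjection_cyclicProjection (ξ : H) :
    IsCyclicProjection M (cyclicProjection M ξ) := by
  refine ⟨IsCommutantInvariant.isProjectionIn_starProjection fun a ha => ?_, ξ, ?_⟩
  · refine Submodule.topologicalClosure_mem_invtSubmodule fun _ => ?_
    rintro ⟨b, hb, rfl⟩
    exact ⟨a * b, mul_mem ha hb, rfl⟩
  · rw [IsGeneratingVector, cyclicProjection, ← ContinuousLinearMap.range_toLinearMap,
      ← LinearMap.coe_range, Submodule.range_starProjection, Submodule.topologicalClosure_coe]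
    rfl

theorem cyclicProjection_apply_self (ξ : H) : cyclicProjection M ξ ξ = ξ :=
  Submodule.starProjection_eq_self_iff.2 <|
    Submodule.le_topologicalClosure _ ⟨1, one_mem _, rfl⟩

end CyclicProjection

section ClosedRangeSup

omit [CompleteSpace H]

def closedRangeSup (F : Set (H →L[ℂ] H)) : Submodule ℂ H :=
  (⨆ e ∈ F, e.range).topologicalClosure

variable {F : Set (H →L[ℂ] H)}

theorem range_le_closedRangeSup {e : H →L[ℂ] H} (he : e ∈ F) : e.range ≤ closedRangeSup F :=
  (le_iSup₂ (f := fun e (_ : e ∈ F) => (e : H →ₗ[ℂ] H).range) e he).trans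
    (Submodule.le_topologicalClosure _)

theorem closedRangeSup_le {L : Submodule ℂ H} (hL : IsClosed (L : Set H))
    (h : ∀ e ∈ F, e.range ≤ L) : closedRangeSup F ≤ L :=
  Submodule.topologicalClosure_minimal _ (iSup₂_le h) hL

theorem apply_eq_zero_of_mem_closedRangeSup {y : H →L[ℂ] H} (h : ∀ e ∈ F, y * e = 0) {v : H}
    (hv : v ∈ closedRangeSup F) : y v = 0 := by
  refine closedRangeSup_le (L := y.ker) (ContinuousLinearMap.isClosed_ker y) (fun e he => ?_) hv
  rintro _ ⟨w, rfl⟩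
  change y (e w) = 0
  rw [← mul_apply_eq_comp, h e he, zero_apply]

end ClosedRangeSup

section SupProjection

instance (F : Set (H →L[ℂ] H)) : CompleteSpace (closedRangeSup F) :=
  Submodule.topologicalClosure.completeSpace _

def supProjection (F : Set (H →L[ℂ] H)) : H →L[ℂ] H :=
  (closedRangeSup F).starProjection

variable {M} {F : Set (H →L[ℂ] H)}

theorem isCommutantInvariant_closedRangeSup (hF : ∀ e ∈ F, e ∈ M) :
    IsCommutantInvariant M (closedRangeSup F) := by
  refine fun a ha => closedRangeSup_le (isClosed_closure.preimage a.continuous) fun e he => ?_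
  rintro _ ⟨w, rfl⟩
  change a (e w) ∈ closedRangeSup F
  rw [← mul_apply_eq_comp, ← VonNeumannAlgebra.mem_commutant_iff.1 ha e (hF e he),
    mul_apply_eq_comp]
  exact range_le_closedRangeSup he (LinearMap.mem_range_self (e : H →ₗ[ℂ] H) _)

theorem isProjectionIn_supProjection (hF : ∀ e ∈ F, e ∈ M) :
    IsProjectionIn M (supProjection F) :=
  (isCommutantInvariant_closedRangeSup hF).isProjectionIn_starProjection

theorem mul_supProjection_eq_zero {y : H →L[ℂ] H} (h : ∀ e ∈ F, y * e = 0) :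
    y * supProjection F = 0 := by
  ext v
  exact apply_eq_zero_of_mem_closedRangeSup h (Submodule.starProjection_apply_mem _ v)

theorem supProjection_mul_eq_self {x : H →L[ℂ] H} (h : ∀ v, x v ∈ closedRangeSup F) :
    supProjection F * x = x := by
  ext v
  exact Submodule.starProjection_eq_self_iff.2 (h v)

theorem isSigmaFiniteProjection_supProjection (hF : F.Countable)
    (hcyc : ∀ e ∈ F, IsCyclicProjection M e) : IsSigmaFiniteProjection M (supProjection F) := by
  refine ⟨isProjectionIn_supProjection fun e he => (hcyc e he).1.1, fun P hP horth => ?_⟩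
  choose! ξ hξ using fun e he => (hcyc e he).2
  have hcover : P ⊆ ⋃ f ∈ F, {e ∈ P | e (ξ f) ≠ 0} := by
    intro e he
    obtain ⟨⟨heM, -, -⟩, he_ne, heq⟩ := hP e he
    by_contra! hno
    simp only [Set.mem_iUnion, Set.mem_setOf_eq, not_exists, not_and, not_not] at hno
    have : e * supProjection F = 0 := mul_supProjection_eq_zero fun f hf =>
      ((hξ f hf).mul_eq_zero_iff (hcyc f hf).1.2.2 heM).2 (hno f hf he)
    exact he_ne (by rw [heq, mul_assoc, this, mul_zero])
  refine (hF.biUnion fun f _ => ?_).mono hcover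
  exact countable_setOf_apply_ne_zero_of_pairwise_mul_eq_zero
    (fun e he => (hP e he).1.isStarProjection) horth (ξ f)

end SupProjection

section MaximalFamily

variable {M}

theorem exists_cyclicProjection_orthogonal {q : H →L[ℂ] H} (hq : IsProjectionIn M q)
    {F : Set (H →L[ℂ] H)} (hF : ∀ e ∈ F, IsProjectionIn M e ∧ e = q * e * q) {w : H}
    (hw : q w ∉ closedRangeSup F) :
    ∃ e₀, IsCyclicProjection M e₀ ∧ e₀ ≠ 0 ∧ e₀ = q * e₀ * q ∧
      ∀ e ∈ F, e₀ * e = 0 ∧ e * e₀ = 0 := by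
  set K := closedRangeSup F
  have hqclosed : IsClosed (q.range : Set H) :=
    ContinuousLinearMap.IsIdempotentElem.isClosed_range hq.2.2
  have hKq : K ≤ q.range := closedRangeSup_le hqclosed fun e he => by
    rintro _ ⟨v, rfl⟩
    exact ⟨e (q v), congrArg (· v) (hF e he).2.symm⟩
  set u := q w - K.starProjection (q w)
  have hu : u ≠ 0 := fun h => hw (sub_eq_zero.1 h ▸ K.starProjection_apply_mem _)
  have huK : u ∈ Kᗮ ⊓ q.range :=
    ⟨K.sub_starProjection_mem_orthogonal _,
      sub_mem ⟨w, rfl⟩ (hKq (K.starProjection_apply_mem _))⟩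
  have he₀ := isCyclicProjection_cyclicProjection M u
  have hrange : (cyclicProjection M u).range ≤ Kᗮ ⊓ q.range := by
    rw [cyclicProjection, Submodule.range_starProjection]
    refine topologicalClosure_commutantOrbit_le M (K.isClosed_orthogonal.inter hqclosed) ?_ huK
    exact (isCommutantInvariant_closedRangeSup fun e he => (hF e he).1.1).orthogonal.inf
      hq.isCommutantInvariant_range
  have hqe₀ : q * cyclicProjection M u = cyclicProjection M u :=
    ContinuousLinearMap.IsIdempotentElem.mul_eq_self_of_range_le hq.2.2
      (hrange.trans inf_le_right)
  have he₀q : cyclicProjection M u * q = cyclicProjection M u := by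
    simpa [hq.2.1.star_eq, he₀.1.2.1.star_eq] using congr(star $hqe₀)
  have horth : ∀ e ∈ F, cyclicProjection M u * e = 0 := fun e he => by
    ext v
    exact he₀.1.isStarProjection.apply_eq_zero_of_range_le_orthogonal
      (hrange.trans inf_le_left) (range_le_closedRangeSup he ⟨v, rfl⟩)
  refine ⟨cyclicProjection M u, he₀, fun h => hu ?_, by rw [mul_assoc, he₀q, hqe₀],
    fun e he => ⟨horth e he, ?_⟩⟩
  · rw [← cyclicProjection_apply_self M u, h, zero_apply]
  · simpa [(hF e he).1.2.1.star_eq, he₀.1.2.1.star_eq] using congr(star $(horth e he))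

theorem IsSigmaFiniteProjection.exists_countable_cyclic_range_le {q : H →L[ℂ] H}
    (hq : IsSigmaFiniteProjection M q) :
    ∃ F : Set (H →L[ℂ] H), F.Countable ∧ (∀ e ∈ F, IsCyclicProjection M e) ∧
      q.range ≤ closedRangeSup F := by
  let C : Set (Set (H →L[ℂ] H)) :=
    {F | (∀ e ∈ F, IsCyclicProjection M e ∧ e ≠ 0 ∧ e = q * e * q) ∧
      F.Pairwise fun e f => e * f = 0}
  obtain ⟨F, ⟨hFC, hForth⟩, hFmax⟩ : ∃ F, Maximal (· ∈ C) F := by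
    refine zorn_subset C fun c hcC hc =>
      ⟨⋃₀ c, ⟨?_, ?_⟩, fun s hs => Set.subset_sUnion_of_mem hs⟩
    · rintro e ⟨s, hs, he⟩
      exact (hcC hs).1 e he
    · exact hc.pairwise_sUnion.2 fun s hs => (hcC hs).2
  refine ⟨F, hq.2 F (fun e he => ⟨(hFC e he).1.1, (hFC e he).2⟩) hForth,
    fun e he => (hFC e he).1, ?_⟩
  rintro _ ⟨w, rfl⟩
  by_contra hw
  obtain ⟨e₀, he₀, he₀_ne, he₀q, he₀F⟩ :=
    exists_cyclicProjection_orthogonal hq.1 (fun e he => ⟨(hFC e he).1.1, (hFC e he).2.2⟩) hw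
  have hins : insert e₀ F ∈ C :=
    ⟨Set.forall_mem_insert.2 ⟨⟨he₀, he₀_ne, he₀q⟩, hFC⟩,
      hForth.insert fun e he _ => he₀F e he⟩
  have he₀_mem : e₀ ∈ F := hFmax hins (Set.subset_insert _ _) (Set.mem_insert _ _)
  exact he₀_ne (by simpa [he₀.1.2.2] using (he₀F e₀ he₀_mem).1)

end MaximalFamily

section Family

variable {M} {Λ : Type*} {p : Λ → H →L[ℂ] H}

omit [CompleteSpace H] in
theorem exists_mul_ne_zero_of_hasSum (hsum : ∀ η, HasSum (fun l => p l η) η)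
    {y : H →L[ℂ] H} (hy : y ≠ 0) : ∃ l, p l * y ≠ 0 := by
  by_contra! h
  refine hy (ContinuousLinearMap.ext fun η => ?_)
  have := hsum (y η)
  simp only [← mul_apply_eq_comp, h, zero_apply] at this
  exact (hasSum_zero.unique this).symm

omit [CompleteSpace H] in
theorem apply_mem_closedRangeSup_image (hsum : ∀ η, HasSum (fun l => p l η) η) {S : Set Λ}
    {x : H →L[ℂ] H} (hx : ∀ l ∉ S, p l * x = 0) (v : H) :
    x v ∈ closedRangeSup (p '' S) := by
  refine (Submodule.isClosed_topologicalClosure _).mem_of_tendsto (hsum (x v))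
    (Filter.Eventually.of_forall fun s => Submodule.sum_mem _ fun l _ => ?_)
  by_cases hl : l ∈ S
  · exact range_le_closedRangeSup (Set.mem_image_of_mem p hl) ⟨x v, rfl⟩
  · rw [← mul_apply_eq_comp, hx l hl, zero_apply]
    exact zero_mem _

theorem setOf_mul_star_ne_zero (hp : ∀ l, IsSelfAdjoint (p l)) (x : H →L[ℂ] H) :
    {l | p l * star x ≠ 0} = {l | x * p l ≠ 0} :=
  Set.ext fun l => not_congr <| by rw [← star_eq_zero, star_mul, star_star, (hp l).star_eq]

theorem countable_setOf_mul_mul_ne_zero (hp : ∀ m, p m ∈ M) {l : Λ}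
    (hcyc : IsCyclicProjection M (p l)) (hsum : ∀ η, Summable fun m => p m η)
    {x : H →L[ℂ] H} (hx : x ∈ M) : {m | p m * x * p l ≠ 0}.Countable := by
  obtain ⟨ξ, hξ⟩ := hcyc.2
  have : {m | p m * x * p l ≠ 0} = Function.support fun m => p m (x ξ) :=
    Set.ext fun m => not_congr (hξ.mul_eq_zero_iff hcyc.1.2.2 (mul_mem (hp m) hx))
  exact this ▸ (hsum (x ξ)).countable_support

theorem countable_setOf_mul_ne_zero_of_countable (hcyc : ∀ l, IsCyclicProjection M (p l))
    (hsum : ∀ η, HasSum (fun l => p l η) η) {x : H →L[ℂ] H} (hx : x ∈ M)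
    (h : {l | p l * x ≠ 0}.Countable) : {m | x * p m ≠ 0}.Countable := by
  have hcover :
      {m | x * p m ≠ 0} ⊆ ⋃ l ∈ {l | p l * x ≠ 0}, {m | p m * star x * p l ≠ 0} := by
    intro m hm
    obtain ⟨l, hl⟩ := exists_mul_ne_zero_of_hasSum hsum hm
    refine Set.mem_biUnion (x := l) (fun h0 => hl (by rw [← mul_assoc, h0, zero_mul])) ?_
    refine fun h0 => hl ?_
    simpa [star_mul, mul_assoc, (hcyc l).1.2.1.star_eq, (hcyc m).1.2.1.star_eq] using
      congr(star $h0)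
  refine (h.biUnion fun l _ => ?_).mono hcover
  exact countable_setOf_mul_mul_ne_zero (fun m => (hcyc m).1.1) (hcyc l)
    (fun η => (hsum η).summable) (star_mem hx)

theorem countable_setOf_mul_ne_zero_comm (hcyc : ∀ l, IsCyclicProjection M (p l))
    (hsum : ∀ η, HasSum (fun l => p l η) η) {x : H →L[ℂ] H} (hx : x ∈ M) :
    {l | p l * x ≠ 0}.Countable ↔ {l | x * p l ≠ 0}.Countable := by
  refine ⟨countable_setOf_mul_ne_zero_of_countable hcyc hsum hx, fun h => ?_⟩
  have hp : ∀ l, IsSelfAdjoint (p l) := fun l => (hcyc l).1.2.1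
  rw [← setOf_mul_star_ne_zero hp] at h
  have := countable_setOf_mul_ne_zero_of_countable hcyc hsum (star_mem hx) h
  rwa [← setOf_mul_star_ne_zero hp, star_star] at this

theorem exists_isSigmaFiniteProjection_mul_eq_self (hcyc : ∀ l, IsCyclicProjection M (p l))
    (hsum : ∀ η, HasSum (fun l => p l η) η) {x : H →L[ℂ] H} (hx : x ∈ M)
    (h : {l | p l * x ≠ 0}.Countable) :
    ∃ q, IsSigmaFiniteProjection M q ∧ q * x = x ∧ x * q = x := by
  have hp : ∀ l, IsSelfAdjoint (p l) := fun l => (hcyc l).1.2.1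
  set S := {l | p l * x ≠ 0} ∪ {l | x * p l ≠ 0}
  have hS : S.Countable := h.union ((countable_setOf_mul_ne_zero_comm hcyc hsum hx).1 h)
  have hqx : supProjection (p '' S) * x = x :=
    supProjection_mul_eq_self <| apply_mem_closedRangeSup_image hsum fun l hl =>
      not_not.1 fun h => hl (Or.inl h)
  have hqx' : supProjection (p '' S) * star x = star x :=
    supProjection_mul_eq_self <| apply_mem_closedRangeSup_image hsum fun l hl =>
      not_not.1 fun h => hl (Or.inr (setOf_mul_star_ne_zero hp x ▸ h))
  have hσ : IsSigmaFiniteProjection M (supProjection (p '' S)) :=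
    isSigmaFiniteProjection_supProjection (hS.image p) (by rintro _ ⟨l, -, rfl⟩; exact hcyc l)
  exact ⟨_, hσ, hqx, by simpa [hσ.1.2.1.star_eq] using congr(star $hqx')⟩

theorem IsSigmaFiniteProjection.countable_setOf_mul_ne_zero {q : H →L[ℂ] H}
    (hq : IsSigmaFiniteProjection M q) (hp : ∀ l, p l ∈ M)
    (hsum : ∀ η, Summable fun l => p l η) {x : H →L[ℂ] H} (hqx : q * x = x) :
    {l | p l * x ≠ 0}.Countable := by
  obtain ⟨F, hF, hcycF, hrange⟩ := hq.exists_countable_cyclic_range_le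
  choose! ξ hξ using fun e he => (hcycF e he).2
  have hcover : {l | p l * x ≠ 0} ⊆ ⋃ e ∈ F, Function.support fun l => p l (ξ e) := by
    intro l hl
    by_contra! hno
    simp only [Set.mem_iUnion, Function.mem_support, not_exists, not_not] at hno
    refine hl (ContinuousLinearMap.ext fun v => ?_)
    rw [← hqx, mul_apply_eq_comp, mul_apply_eq_comp, zero_apply]
    exact apply_eq_zero_of_mem_closedRangeSup
      (fun e he => ((hξ e he).mul_eq_zero_iff (hcycF e he).1.2.2 (hp l)).2 (hno e he))
      (hrange ⟨x v, rfl⟩)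
  exact (hF.biUnion fun e _ => (hsum (ξ e)).countable_support).mono hcover

end Family

theorem sigmaSubspace_description
    {Λ : Type*} (p : Λ → (H →L[ℂ] H))
    (hcyc : ∀ l, IsCyclicProjection M (p l))
    (hsum : ∀ η : H, HasSum (fun l => p l η) η) :
    ({x : H →L[ℂ] H | x ∈ M ∧ {l : Λ | p l * x ≠ 0}.Countable}
        = {x : H →L[ℂ] H | x ∈ M ∧ {l : Λ | x * p l ≠ 0}.Countable}) ∧
    ({x : H →L[ℂ] H | x ∈ M ∧ {l : Λ | p l * x ≠ 0}.Countable}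
        = {x : H →L[ℂ] H | x ∈ M ∧ ∃ q, IsSigmaFiniteProjection M q ∧ q * x = x}) ∧
    ({x : H →L[ℂ] H | x ∈ M ∧ {l : Λ | p l * x ≠ 0}.Countable}
        = {x : H →L[ℂ] H | x ∈ M ∧ ∃ q, IsSigmaFiniteProjection M q ∧ q * x * q = x}) ∧
    (∀ x ∈ {x : H →L[ℂ] H | x ∈ M ∧ {l : Λ | p l * x ≠ 0}.Countable},
        star x ∈ {x : H →L[ℂ] H | x ∈ M ∧ {l : Λ | p l * x ≠ 0}.Countable}) ∧
    ((0 : H →L[ℂ] H) ∈ {x : H →L[ℂ] H | x ∈ M ∧ {l : Λ | p l * x ≠ 0}.Countable}) ∧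
    (∀ x ∈ {x : H →L[ℂ] H | x ∈ M ∧ {l : Λ | p l * x ≠ 0}.Countable},
      ∀ y ∈ {x : H →L[ℂ] H | x ∈ M ∧ {l : Λ | p l * x ≠ 0}.Countable},
        x + y ∈ {x : H →L[ℂ] H | x ∈ M ∧ {l : Λ | p l * x ≠ 0}.Countable}) ∧
    (∀ (c : ℂ), ∀ x ∈ {x : H →L[ℂ] H | x ∈ M ∧ {l : Λ | p l * x ≠ 0}.Countable},
        c • x ∈ {x : H →L[ℂ] H | x ∈ M ∧ {l : Λ | p l * x ≠ 0}.Countable}) ∧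
    (∀ x ∈ {x : H →L[ℂ] H | x ∈ M ∧ {l : Λ | p l * x ≠ 0}.Countable}, ∀ a ∈ M,
        a * x ∈ {x : H →L[ℂ] H | x ∈ M ∧ {l : Λ | p l * x ≠ 0}.Countable} ∧
        x * a ∈ {x : H →L[ℂ] H | x ∈ M ∧ {l : Λ | p l * x ≠ 0}.Countable}) := by
  have hp : ∀ l, p l ∈ M := fun l => (hcyc l).1.1
  have hcomm : ∀ x ∈ M, {l | p l * x ≠ 0}.Countable ↔ {l | x * p l ≠ 0}.Countable :=
    fun x hx => countable_setOf_mul_ne_zero_comm hcyc hsum hx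
  have hrow {q x : H →L[ℂ] H} (hq : IsSigmaFiniteProjection M q) (hqx : q * x = x) :
      {l | p l * x ≠ 0}.Countable :=
    hq.countable_setOf_mul_ne_zero hp (fun η => (hsum η).summable) hqx
  refine ⟨Set.ext fun x => and_congr_right (hcomm x), ?_, ?_, ?_, ⟨zero_mem _, by simp⟩,
    ?_, ?_, ?_⟩
  · refine Set.ext fun x => and_congr_right fun hx =>
      ⟨fun h => ?_, fun ⟨q, hq, hqx⟩ => hrow hq hqx⟩
    obtain ⟨q, hq, hqx, -⟩ := exists_isSigmaFiniteProjection_mul_eq_self hcyc hsum hx h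
    exact ⟨q, hq, hqx⟩
  · refine Set.ext fun x => and_congr_right fun hx => ⟨fun h => ?_, fun ⟨q, hq, hqxq⟩ =>
      hrow hq (by rw [← hqxq, ← mul_assoc, ← mul_assoc, hq.1.2.2])⟩
    obtain ⟨q, hq, hqx, hxq⟩ := exists_isSigmaFiniteProjection_mul_eq_self hcyc hsum hx h
    exact ⟨q, hq, by rw [hqx, hxq]⟩
  · rintro x ⟨hx, h⟩
    exact ⟨star_mem hx, setOf_mul_star_ne_zero (fun l => (hcyc l).1.2.1) x ▸ (hcomm x hx).1 h⟩
  · rintro x ⟨hx, hA⟩ y ⟨hy, hB⟩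
    refine ⟨add_mem hx hy, (hA.union hB).mono fun l hl => ?_⟩
    exact or_iff_not_imp_left.2 fun hxl hyl => hl (by rw [mul_add, not_not.1 hxl, hyl, add_zero])
  · rintro c x ⟨hx, h⟩
    exact ⟨M.toStarSubalgebra.smul_mem hx c,
      h.mono fun l => mt fun h0 => by rw [mul_smul_comm, h0, smul_zero]⟩
  · rintro x ⟨hx, h⟩ a ha
    refine ⟨⟨mul_mem ha hx, (hcomm _ (mul_mem ha hx)).2 ?_⟩,
      mul_mem hx ha, h.mono fun l => mt fun h0 => by rw [← mul_assoc, h0, zero_mul]⟩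
    exact ((hcomm x hx).1 h).mono fun l => mt fun h0 => by rw [mul_assoc, h0, mul_zero]

end Paper
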